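/- Let n, d be natural numbers, let Φ be a real n×d matrix, let c > 0 and Γ > 0 be real numbers, let v, p ∈ ℝ^d with ‖p‖² ≤ Γ (Euclidean norm), and let ε ∈ ℝ^n. Then |vᵀ p − (Φ v)ᵀ (Φ Φᵀ + c I)⁻¹ (Φ p + ε)| ≤ √(vᵀ v − (Φ v)ᵀ (Φ Φᵀ + c I)⁻¹ Φ v) · (√Γ + (1/√c) · √(εᵀ Φ Φᵀ (Φ Φᵀ + c I)⁻¹ ε)). -/

import Mathlib

/-!
With `S = (ΦᵀΦ + c)⁻¹`, the push-through identity `Φᵀ (ΦΦᵀ + c)⁻¹ = S Φᵀ` turns the squared power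
function `ρ²` into `c vᵀSv` and the error into `c vᵀSp - vᵀS(Φᵀε)`. Cauchy–Schwarz for the positive
definite form `S` bounds the first piece by `ρ √(c pᵀSp) ≤ ρ √Γ`, since `c S ≤ 1`, and the second by
`(ρ / √c) √(εᵀ ΦSΦᵀ ε)`, where again `ΦSΦᵀ = ΦΦᵀ (ΦΦᵀ + c)⁻¹`.
-/

open Matrix

namespace Matrix

variable {m n R : Type*} [Fintype m] [Fintype n]

lemma PosSemidef.abs_dotProduct_mulVec_le [DecidableEq n] {M : Matrix n n ℝ} (hM : M.PosSemidef)
    (x y : n → ℝ) : |x ⬝ᵥ M *ᵥ y| ≤ √(x ⬝ᵥ M *ᵥ x) * √(y ⬝ᵥ M *ᵥ y) := by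
  have hsymm : y ⬝ᵥ M *ᵥ x = x ⬝ᵥ M *ᵥ y := by
    rw [dotProduct_mulVec, ← mulVec_transpose, dotProduct_comm,
      ← conjTranspose_eq_transpose_of_trivial, hM.isHermitian.eq]
  have hcs := (toBilin' M).apply_mul_apply_le_of_forall_zero_le
    (fun z ↦ by simpa [toBilin'_apply'] using hM.dotProduct_mulVec_nonneg z) x y
  simp only [toBilin'_apply', hsymm] at hcs
  rw [← Real.sqrt_mul (by simpa using hM.dotProduct_mulVec_nonneg x)]
  exact Real.abs_le_sqrt (by nlinarith)

lemma dotProduct_sub_dotProduct_mulVec_mulVec [DecidableEq n] [CommRing R] (Φ : Matrix m n R)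
    (G : Matrix m m R) (x y : n → R) :
    x ⬝ᵥ y - (Φ *ᵥ x) ⬝ᵥ (G *ᵥ (Φ *ᵥ y)) = x ⬝ᵥ (1 - Φᵀ * G * Φ) *ᵥ y := by
  rw [sub_mulVec, one_mulVec, dotProduct_sub, ← mulVec_mulVec, ← mulVec_mulVec,
    dotProduct_mulVec x, vecMul_transpose]

section PushThrough

variable [DecidableEq m] [DecidableEq n] [CommRing R] (X : Matrix m n R) (Y : Matrix n m R)
  (c : R)

lemma mul_inv_mul_add_smul_one (hXY : IsUnit (X * Y + c • 1).det)
    (hYX : IsUnit (Y * X + c • 1).det) :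
    Y * (X * Y + c • 1)⁻¹ = (Y * X + c • 1)⁻¹ * Y := by
  have hcomm : (Y * X + c • 1) * Y = Y * (X * Y + c • 1) := by
    simp only [Matrix.add_mul, Matrix.mul_add, Matrix.mul_assoc, Matrix.smul_mul,
      Matrix.mul_smul, Matrix.one_mul, Matrix.mul_one]
  calc Y * (X * Y + c • 1)⁻¹
      = (Y * X + c • 1)⁻¹ * ((Y * X + c • 1) * Y) * (X * Y + c • 1)⁻¹ := by
        rw [nonsing_inv_mul_cancel_left _ _ hYX]
    _ = (Y * X + c • 1)⁻¹ * Y := by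
        rw [hcomm, ← Matrix.mul_assoc, mul_nonsing_inv_cancel_right _ _ hXY]

lemma one_sub_mul_inv_mul_add_smul_one (hXY : IsUnit (X * Y + c • 1).det)
    (hYX : IsUnit (Y * X + c • 1).det) :
    1 - Y * (X * Y + c • 1)⁻¹ * X = c • (Y * X + c • 1)⁻¹ := by
  rw [mul_inv_mul_add_smul_one X Y c hXY hYX, Matrix.mul_assoc,
    show Y * X = (Y * X + c • 1) - c • 1 by abel, Matrix.mul_sub, add_sub_cancel_right,
    nonsing_inv_mul _ hYX, Matrix.mul_smul, Matrix.mul_one, sub_sub_cancel]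

end PushThrough

section Regularized

variable (Φ : Matrix m n ℝ) {c : ℝ}

lemma posDef_mul_transpose_add_smul_one [DecidableEq m] (hc : 0 < c) : (Φ * Φᵀ + c • 1).PosDef := by
  refine PosDef.posSemidef_add ?_ (PosDef.one.smul hc)
  simpa using posSemidef_self_mul_conjTranspose Φ

lemma posDef_transpose_mul_add_smul_one [DecidableEq n] (hc : 0 < c) : (Φᵀ * Φ + c • 1).PosDef := by
  simpa using posDef_mul_transpose_add_smul_one Φᵀ hc

lemma isUnit_det_mul_transpose_add_smul_one [DecidableEq m] (hc : 0 < c) :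
    IsUnit (Φ * Φᵀ + c • 1).det :=
  (isUnit_iff_isUnit_det _).mp (posDef_mul_transpose_add_smul_one Φ hc).isUnit

lemma isUnit_det_transpose_mul_add_smul_one [DecidableEq n] (hc : 0 < c) :
    IsUnit (Φᵀ * Φ + c • 1).det :=
  (isUnit_iff_isUnit_det _).mp (posDef_transpose_mul_add_smul_one Φ hc).isUnit

variable [DecidableEq m] [DecidableEq n]

lemma transpose_mul_inv_mul_transpose_add_smul_one (hc : 0 < c) :
    Φᵀ * (Φ * Φᵀ + c • 1)⁻¹ = (Φᵀ * Φ + c • 1)⁻¹ * Φᵀ :=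
  mul_inv_mul_add_smul_one Φ Φᵀ c (isUnit_det_mul_transpose_add_smul_one Φ hc)
    (isUnit_det_transpose_mul_add_smul_one Φ hc)

lemma dotProduct_sub_dotProduct_inv_mulVec (hc : 0 < c) (x y : n → ℝ) :
    x ⬝ᵥ y - (Φ *ᵥ x) ⬝ᵥ ((Φ * Φᵀ + c • 1)⁻¹ *ᵥ (Φ *ᵥ y)) =
      c * (x ⬝ᵥ (Φᵀ * Φ + c • 1)⁻¹ *ᵥ y) := by
  rw [dotProduct_sub_dotProduct_mulVec_mulVec, one_sub_mul_inv_mul_add_smul_one Φ Φᵀ c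
    (isUnit_det_mul_transpose_add_smul_one Φ hc) (isUnit_det_transpose_mul_add_smul_one Φ hc),
    smul_mulVec, dotProduct_smul, smul_eq_mul]

lemma mul_dotProduct_inv_mulVec_le (hc : 0 < c) (x : n → ℝ) :
    c * (x ⬝ᵥ (Φᵀ * Φ + c • 1)⁻¹ *ᵥ x) ≤ x ⬝ᵥ x := by
  have hnonneg := (posDef_mul_transpose_add_smul_one Φ hc).inv.posSemidef.dotProduct_mulVec_nonneg
    (Φ *ᵥ x)
  rw [star_trivial] at hnonneg
  linarith [dotProduct_sub_dotProduct_inv_mulVec Φ hc x x]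

lemma dotProduct_inv_mulVec (hc : 0 < c) (x : n → ℝ) (ε : m → ℝ) :
    (Φ *ᵥ x) ⬝ᵥ ((Φ * Φᵀ + c • 1)⁻¹ *ᵥ ε) = x ⬝ᵥ (Φᵀ * Φ + c • 1)⁻¹ *ᵥ (Φᵀ *ᵥ ε) := by
  rw [← vecMul_transpose Φ x, ← dotProduct_mulVec, mulVec_mulVec,
    transpose_mul_inv_mul_transpose_add_smul_one Φ hc, ← mulVec_mulVec]

lemma dotProduct_transpose_mulVec_inv (hc : 0 < c) (ε : m → ℝ) :
    (Φᵀ *ᵥ ε) ⬝ᵥ (Φᵀ * Φ + c • 1)⁻¹ *ᵥ (Φᵀ *ᵥ ε) =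
      ε ⬝ᵥ (Φ * Φᵀ * (Φ * Φᵀ + c • 1)⁻¹) *ᵥ ε := by
  rw [mulVec_mulVec, dotProduct_comm, dotProduct_transpose_mulVec, mulVec_mulVec,
    ← transpose_mul_inv_mul_transpose_add_smul_one Φ hc, Matrix.mul_assoc]

end Regularized

end Matrix

theorem corollary1_deterministic_bound_general (n d : ℕ) (Φ : Matrix (Fin n) (Fin d) ℝ) (c Γ : ℝ)
    (hc : 0 < c) (v p : Fin d → ℝ) (hp : p ⬝ᵥ p ≤ Γ) (ε : Fin n → ℝ) :
    |v ⬝ᵥ p - (Φ *ᵥ v) ⬝ᵥ ((Φ * Φᵀ + c • (1 : Matrix (Fin n) (Fin n) ℝ))⁻¹ *ᵥ (Φ *ᵥ p + ε))| ≤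
      Real.sqrt (v ⬝ᵥ v -
          (Φ *ᵥ v) ⬝ᵥ ((Φ * Φᵀ + c • (1 : Matrix (Fin n) (Fin n) ℝ))⁻¹ *ᵥ (Φ *ᵥ v))) *
        (Real.sqrt Γ + (1 / Real.sqrt c) *
          Real.sqrt (ε ⬝ᵥ ((Φ * Φᵀ * (Φ * Φᵀ + c • (1 : Matrix (Fin n) (Fin n) ℝ))⁻¹) *ᵥ ε))) := by
  rw [mulVec_add, dotProduct_add, ← sub_sub, dotProduct_sub_dotProduct_inv_mulVec Φ hc,
    dotProduct_sub_dotProduct_inv_mulVec Φ hc, dotProduct_inv_mulVec Φ hc,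
    ← dotProduct_transpose_mulVec_inv Φ hc]
  have hS := (posDef_transpose_mul_add_smul_one Φ hc).inv.posSemidef
  set S := (Φᵀ * Φ + c • (1 : Matrix (Fin d) (Fin d) ℝ))⁻¹
  set w := Φᵀ *ᵥ ε
  calc |c * (v ⬝ᵥ S *ᵥ p) - v ⬝ᵥ S *ᵥ w|
      ≤ c * |v ⬝ᵥ S *ᵥ p| + |v ⬝ᵥ S *ᵥ w| :=
        (abs_sub _ _).trans_eq (by rw [abs_mul, abs_of_pos hc])
    _ ≤ c * (√(v ⬝ᵥ S *ᵥ v) * √(p ⬝ᵥ S *ᵥ p)) + √(v ⬝ᵥ S *ᵥ v) * √(w ⬝ᵥ S *ᵥ w) := by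
        gcongr <;> exact hS.abs_dotProduct_mulVec_le _ _
    _ = √(c * (v ⬝ᵥ S *ᵥ v)) * (√c * √(p ⬝ᵥ S *ᵥ p) + 1 / √c * √(w ⬝ᵥ S *ᵥ w)) := by
        rw [Real.sqrt_mul hc.le]
        field_simp
        rw [Real.sq_sqrt hc.le]
        ring
    _ ≤ _ := by
        gcongr
        rw [← Real.sqrt_mul hc.le]
        exact Real.sqrt_le_sqrt ((mul_dotProduct_inv_mulVec_le Φ hc p).trans hp)

theorem corollary1_deterministic_bound (n d : ℕ) (Φ : Matrix (Fin n) (Fin d) ℝ) (c Γ : ℝ)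
    (hc : 0 < c) (hΓ : 0 < Γ) (v p : Fin d → ℝ) (hp : p ⬝ᵥ p ≤ Γ) (ε : Fin n → ℝ) :
    |v ⬝ᵥ p - (Φ *ᵥ v) ⬝ᵥ ((Φ * Φᵀ + c • (1 : Matrix (Fin n) (Fin n) ℝ))⁻¹ *ᵥ (Φ *ᵥ p + ε))| ≤
      Real.sqrt (v ⬝ᵥ v -
          (Φ *ᵥ v) ⬝ᵥ ((Φ * Φᵀ + c • (1 : Matrix (Fin n) (Fin n) ℝ))⁻¹ *ᵥ (Φ *ᵥ v))) *
        (Real.sqrt Γ + (1 / Real.sqrt c) *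
          Real.sqrt (ε ⬝ᵥ ((Φ * Φᵀ * (Φ * Φᵀ + c • (1 : Matrix (Fin n) (Fin n) ℝ))⁻¹) *ᵥ ε))) :=
  corollary1_deterministic_bound_general n d Φ c Γ hc v p hp ε
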